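/- For every k ≥ 2: 𝔪(σ-(2^k − 1)-linked) ≤ 𝔢_2^const(k). That is, if κ is a cardinal such that for every σ-(2^k − 1)-linked partial order P and every family D of at most κ many dense subsets of P there exists a filter on P meeting every member of D, then every family F ⊆ 2^ω of size at most κ is k-constantly predicted by a single predictor; hence the least cardinal at which Martin's axiom fails for some σ-(2^k − 1)-linked partial order is at most the least cardinality of a family F ⊆ 2^ω such that no single predictor k-constantly predicts all members of F. -/

import Mathlib

open Cardinal

/-- The initial segment `x↾i` of `x : n^ω`, as a finite sequence. -/
def seg {n : ℕ} (x : ℕ → Fin n) (i : ℕ) : List (Fin n) :=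
  List.ofFn (fun j : Fin i => x j)

/-- `π` k-constantly predicts `x`: for all but finitely many `m` there is
`i ∈ [m, m+k)` with `x i = π (x↾i)`. -/
def KPred {n : ℕ} (k : ℕ) (π : List (Fin n) → Fin n) (x : ℕ → Fin n) : Prop :=
  ∃ N, ∀ m, N ≤ m → ∃ i, m ≤ i ∧ i < m + k ∧ x i = π (seg x i)

/-- `π` weakly k-constantly predicts `x`: for all but finitely many `m` there is
`i < k` with `x (m*k+i) = π (x↾(m*k+i))`. -/
def WPred {n : ℕ} (k : ℕ) (π : List (Fin n) → Fin n) (x : ℕ → Fin n) : Prop :=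
  ∃ N, ∀ m, N ≤ m → ∃ i, i < k ∧ x (m * k + i) = π (seg x (m * k + i))

/-- The k-constant prediction number 𝔳ₙᶜᵒⁿˢᵗ(k). -/
noncomputable def vConst (n k : ℕ) : Cardinal :=
  sInf { c | ∃ P : Set (List (Fin n) → Fin n), #P = c ∧
    ∀ x : ℕ → Fin n, ∃ π ∈ P, KPred k π x }

/-- The weak k-constant prediction number 𝔳̄ₙᶜᵒⁿˢᵗ(k). -/
noncomputable def vBar (n k : ℕ) : Cardinal :=
  sInf { c | ∃ P : Set (List (Fin n) → Fin n), #P = c ∧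
    ∀ x : ℕ → Fin n, ∃ π ∈ P, WPred k π x }

/-- The k-constant evasion number 𝔢ₙᶜᵒⁿˢᵗ(k). -/
noncomputable def eConst (n k : ℕ) : Cardinal :=
  sInf { c | ∃ F : Set (ℕ → Fin n), #F = c ∧
    ∀ π : List (Fin n) → Fin n, ∃ x ∈ F, ¬ KPred k π x }

/-- The weak k-constant evasion number 𝔢̄ₙᶜᵒⁿˢᵗ(k). -/
noncomputable def eBar (n k : ℕ) : Cardinal :=
  sInf { c | ∃ F : Set (ℕ → Fin n), #F = c ∧
    ∀ π : List (Fin n) → Fin n, ∃ x ∈ F, ¬ WPred k π x }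

/-- A partial order is σ-j-linked if it is a countable union of sets, any `j` elements
of a single one of which have a common lower bound. -/
def SigmaLinked (j : ℕ) (P : Type) [PartialOrder P] : Prop :=
  ∃ Q : ℕ → Set P, (∀ p : P, ∃ n, p ∈ Q n) ∧
    ∀ n : ℕ, ∀ e : Fin j → P, (∀ i, e i ∈ Q n) → ∃ q : P, ∀ i, q ≤ e i

/-- `D` is dense in a partial order: every element has a lower bound in `D`. -/
def DenseBelow {P : Type} [PartialOrder P] (D : Set P) : Prop :=
  ∀ p : P, ∃ q ∈ D, q ≤ p

/-- A filter on a partial order: upward closed, and any two elements have a common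
lower bound in the filter. -/
def IsPFilter {P : Type} [PartialOrder P] (G : Set P) : Prop :=
  (∀ p ∈ G, ∀ q : P, p ≤ q → q ∈ G) ∧
  ∀ p ∈ G, ∀ q ∈ G, ∃ r ∈ G, r ≤ p ∧ r ≤ q

/-- `MA_κ` holds for all σ-j-linked partial orders: any family of at most `κ` many dense
subsets admits a filter meeting them all. -/
def MAat (j : ℕ) (κ : Cardinal) : Prop :=
  ∀ (P : Type) [PartialOrder P], SigmaLinked j P →
    ∀ D : Set (Set P), #D ≤ κ → (∀ d ∈ D, DenseBelow d) →
      ∃ G : Set P, IsPFilter G ∧ ∀ d ∈ D, (G ∩ d).Nonempty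

/-- `𝔪(σ-j-linked)`: the least `κ` at which Martin's axiom fails for some σ-j-linked
partial order. -/
noncomputable def mLinked (j : ℕ) : Cardinal :=
  sInf { κ : Cardinal | ¬ MAat j κ }

@[simp] lemma seg_length {n : ℕ} (x : ℕ → Fin n) (i : ℕ) : (seg x i).length = i := by
  simp [seg]

lemma seg_eq_iff {n : ℕ} {x y : ℕ → Fin n} {i : ℕ} :
    seg x i = seg y i ↔ ∀ j < i, x j = y j := by
  constructor
  · intro h j hj
    have := List.ofFn_inj.mp h
    exact congrFun this ⟨j, hj⟩
  · intro h
    exact List.ofFn_inj.mpr (funext fun j => h j j.2)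

lemma seg_mono {n : ℕ} {x y : ℕ → Fin n} {i j : ℕ} (hij : j ≤ i)
    (h : seg x i = seg y i) : seg x j = seg y j := by
  rw [seg_eq_iff] at h ⊢
  exact fun l hl => h l (lt_of_lt_of_le hl hij)

lemma seg_succ {n : ℕ} (x : ℕ → Fin n) (i : ℕ) :
    seg x (i+1) = seg x i ++ [x i] := by
  rw [seg, List.ofFn_succ']
  simp [seg, List.concat_eq_append]

lemma seg_succ_eq_iff {n : ℕ} {x y : ℕ → Fin n} {i : ℕ} :
    seg x (i+1) = seg y (i+1) ↔ (seg x i = seg y i ∧ x i = y i) := by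
  rw [seg_eq_iff, seg_eq_iff]
  constructor
  · intro h
    exact ⟨fun j hj => h j (by omega), h i (by omega)⟩
  · rintro ⟨h1, h2⟩ j hj
    rcases Nat.lt_succ_iff_lt_or_eq.mp hj with h | h
    · exact h1 j h
    · subst h; exact h2

/-- separation level for a finite set of reals -/
lemma exists_sep {B : Set (ℕ → Fin 2)} (hB : B.Finite) :
    ∃ M : ℕ, ∀ x ∈ B, ∀ y ∈ B, x ≠ y → ∀ ℓ, M ≤ ℓ → seg x ℓ ≠ seg y ℓ := by
  classical
  have hdiff : ∀ p : (ℕ → Fin 2) × (ℕ → Fin 2), p.1 ≠ p.2 → ∃ i, p.1 i ≠ p.2 i := by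
    intro p hp
    by_contra hc
    push_neg at hc
    exact hp (funext fun i => hc i)
  choose g hg using hdiff
  set f : (ℕ → Fin 2) × (ℕ → Fin 2) → ℕ := fun p =>
    if h : p.1 = p.2 then 0 else g p h with hf
  have hfin : ((B ×ˢ B).image f).Finite := (hB.prod hB).image f
  obtain ⟨M0, hM0⟩ := hfin.bddAbove
  refine ⟨M0 + 1, ?_⟩
  intro x hx y hy hxy ℓ hℓ hseg
  have hmem : f (x, y) ∈ (B ×ˢ B).image f := ⟨(x, y), ⟨hx, hy⟩, rfl⟩
  have hle : f (x, y) ≤ M0 := hM0 hmem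
  have hne : (x, y).1 ≠ (x, y).2 := hxy
  have hfval : f (x, y) = g (x, y) hne := by rw [hf]; simp only [dif_neg hne]
  have := hg (x, y) hne
  rw [← hfval] at this
  exact this (seg_eq_iff.mp hseg _ (by omega))

/-- the majority value of members of `B` passing through node `t` -/
noncomputable def maj (B : Set (ℕ → Fin 2)) (t : List (Fin 2)) : Fin 2 :=
  if {y ∈ B | seg y t.length = t ∧ y t.length = 1}.ncard
      ≥ {y ∈ B | seg y t.length = t ∧ y t.length = 0}.ncard then 1 else 0

lemma maj_seg (B : Set (ℕ → Fin 2)) (x : ℕ → Fin 2) (ℓ : ℕ) :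
    maj B (seg x ℓ) =
      if {y ∈ B | seg y ℓ = seg x ℓ ∧ y ℓ = 1}.ncard
        ≥ {y ∈ B | seg y ℓ = seg x ℓ ∧ y ℓ = 0}.ncard then 1 else 0 := by
  rw [maj]
  simp only [seg_length]

lemma maj_singleton {B : Set (ℕ → Fin 2)} {x : ℕ → Fin 2} {ℓ : ℕ}
    (hx : x ∈ B) (hsing : ∀ y ∈ B, seg y ℓ = seg x ℓ → y = x) :
    maj B (seg x ℓ) = x ℓ := by
  have hset : ∀ b : Fin 2, {y ∈ B | seg y ℓ = seg x ℓ ∧ y ℓ = b}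
      = if x ℓ = b then {x} else ∅ := by
    intro b
    ext y
    by_cases hb : x ℓ = b
    · rw [if_pos hb]
      constructor
      · rintro ⟨hyB, h1, h2⟩
        exact hsing y hyB h1
      · rintro rfl
        exact ⟨hx, rfl, hb⟩
    · rw [if_neg hb]
      constructor
      · rintro ⟨hyB, h1, h2⟩
        exact absurd (hsing y hyB h1 ▸ h2) hb
      · rintro ⟨⟩
  rw [maj_seg, hset 0, hset 1]
  rcases (by omega : x ℓ = 0 ∨ x ℓ = 1) with h | h <;> rw [h] <;> simp

/-- the hit lemma -/
lemma maj_hit {k : ℕ} {B : Set (ℕ → Fin 2)} (hB : B.Finite) {x : ℕ → Fin 2}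
    (hx : x ∈ B) {j : ℕ}
    (hcard : {y ∈ B | seg y j = seg x j}.ncard ≤ 2 ^ k - 1) :
    ∃ i, j ≤ i ∧ i < j + k ∧ x i = maj B (seg x i) := by
  by_contra hc
  push_neg at hc
  have step : ∀ i, j ≤ i → i < j + k →
      2 * {y ∈ B | seg y (i+1) = seg x (i+1)}.ncard ≤ {y ∈ B | seg y i = seg x i}.ncard := by
    intro i hi1 hi2
    have hmiss := hc i hi1 hi2
    set C : Fin 2 → Set (ℕ → Fin 2) := fun b => {y ∈ B | seg y i = seg x i ∧ y i = b} with hC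
    have hCfin : ∀ b, (C b).Finite := fun b => hB.subset (fun y hy => hy.1)
    have hGsplit : {y ∈ B | seg y i = seg x i}.ncard = (C 0).ncard + (C 1).ncard := by
      rw [← Set.ncard_union_eq (by
          rw [Set.disjoint_left]
          rintro y ⟨_, _, h0⟩ ⟨_, _, h1⟩
          rw [h0] at h1; exact absurd h1 (by decide)) (hCfin 0) (hCfin 1)]
      congr 1
      ext y
      simp only [hC, Set.mem_union, Set.mem_setOf_eq]
      constructor
      · rintro ⟨h1, h2⟩
        rcases (by omega : y i = 0 ∨ y i = 1) with h | h
        · exact Or.inl ⟨h1, h2, h⟩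
        · exact Or.inr ⟨h1, h2, h⟩
      · rintro (⟨h1, h2, _⟩ | ⟨h1, h2, _⟩) <;> exact ⟨h1, h2⟩
    have hGsucc : {y ∈ B | seg y (i+1) = seg x (i+1)} = C (x i) := by
      ext y
      simp only [hC, Set.mem_setOf_eq]
      constructor
      · rintro ⟨h1, h2⟩
        rw [seg_succ_eq_iff] at h2
        exact ⟨h1, h2⟩
      · rintro ⟨h1, h2⟩
        exact ⟨h1, seg_succ_eq_iff.mpr h2⟩
    have hmaj : maj B (seg x i) = (if (C 1).ncard ≥ (C 0).ncard then (1 : Fin 2) else 0) :=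
      maj_seg B x i
    rw [hGsucc]
    rcases (by omega : x i = 0 ∨ x i = 1) with h | h
    · have hge : (C 1).ncard ≥ (C 0).ncard := by
        by_contra hcon
        rw [hmaj, if_neg hcon] at hmiss
        exact hmiss (h ▸ rfl)
      rw [h]
      omega
    · have hlt : ¬ ((C 1).ncard ≥ (C 0).ncard) := by
        intro hcon
        rw [hmaj, if_pos hcon] at hmiss
        exact hmiss (h ▸ rfl)
      rw [h]
      omega
  have main : ∀ d, d ≤ k →
      2 ^ d * {y ∈ B | seg y (j+d) = seg x (j+d)}.ncard ≤ {y ∈ B | seg y j = seg x j}.ncard := by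
    intro d
    induction d with
    | zero => intro _; simpa using le_refl _
    | succ d ih =>
      intro hd
      have h1 := ih (by omega)
      have h2 := step (j + d) (by omega) (by omega)
      calc 2 ^ (d+1) * {y ∈ B | seg y (j+(d+1)) = seg x (j+(d+1))}.ncard
          = 2 ^ d * (2 * {y ∈ B | seg y ((j+d)+1) = seg x ((j+d)+1)}.ncard) := by
            rw [show j + (d+1) = (j+d)+1 by omega]
            ring
        _ ≤ 2 ^ d * {y ∈ B | seg y (j+d) = seg x (j+d)}.ncard :=
            Nat.mul_le_mul_left _ h2
        _ ≤ _ := h1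
  have hfinal := main k le_rfl
  have hpos : 0 < {y ∈ B | seg y (j+k) = seg x (j+k)}.ncard := by
    rw [Set.ncard_pos (hB.subset (fun y hy => hy.1))]
    exact ⟨x, hx, rfl⟩
  have hp : 0 < 2 ^ k := Nat.pow_pos (by omega)
  have : 2 ^ k ≤ 2 ^ k * {y ∈ B | seg y (j+k) = seg x (j+k)}.ncard :=
    Nat.le_mul_of_pos_right _ hpos
  omega

/-! ## The forcing poset -/

@[ext] structure Cond (k : ℕ) where
  n : ℕ
  σ : List (Fin 2) → Fin 2
  A : Set ((ℕ → Fin 2) × ℕ)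
  hfin : A.Finite
  hnorm : ∀ l : List (Fin 2), n ≤ l.length → σ l = 0
  hm : ∀ p ∈ A, p.2 ≤ n
  hsep : ∀ p ∈ A, ∀ q ∈ A, p.1 ≠ q.1 → seg p.1 n ≠ seg q.1 n
  hwin : ∀ p ∈ A, ∀ j, p.2 ≤ j → j + k ≤ n →
    ∃ i, j ≤ i ∧ i < j + k ∧ p.1 i = σ (seg p.1 i)
  htop : ∀ p ∈ A, 0 < n → p.1 (n-1) = σ (seg p.1 (n-1))

instance (k : ℕ) : PartialOrder (Cond k) where
  le q p := p.n ≤ q.n ∧ (∀ l : List (Fin 2), l.length < p.n → q.σ l = p.σ l) ∧ p.A ⊆ q.A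
  le_refl p := ⟨le_rfl, fun _ _ => rfl, subset_rfl⟩
  le_trans r q p h1 h2 :=
    ⟨h2.1.trans h1.1,
     fun l hl => (h1.2.1 l (lt_of_lt_of_le hl h2.1)).trans (h2.2.1 l hl),
     h2.2.2.trans h1.2.2⟩
  le_antisymm p q h1 h2 := by
    have hn : p.n = q.n := le_antisymm h2.1 h1.1
    ext : 1
    · exact hn
    · funext l
      by_cases hl : l.length < q.n
      · exact h1.2.1 l hl
      · rw [p.hnorm l (by omega), q.hnorm l (by omega)]
    · exact le_antisymm (Set.Subset.antisymm h2.2.2 h1.2.2).le (Set.Subset.antisymm h2.2.2 h1.2.2).ge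

lemma Cond.le_def {k : ℕ} {q p : Cond k} :
    q ≤ p ↔ p.n ≤ q.n ∧ (∀ l : List (Fin 2), l.length < p.n → q.σ l = p.σ l) ∧ p.A ⊆ q.A :=
  Iff.rfl

/-- The main extension lemma. -/
lemma ext_lemma {k : ℕ} (hk : 1 ≤ k) (n N : ℕ) (σ : List (Fin 2) → Fin 2)
    (A : Set ((ℕ → Fin 2) × ℕ)) (S : Set (ℕ → Fin 2))
    (hAfin : A.Finite) (hSfin : S.Finite)
    (hnorm : ∀ l : List (Fin 2), n ≤ l.length → σ l = 0)
    (hm : ∀ p ∈ A, p.2 ≤ n)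
    (hwin : ∀ p ∈ A, ∀ j, p.2 ≤ j → j + k ≤ n →
      ∃ i, j ≤ i ∧ i < j + k ∧ p.1 i = σ (seg p.1 i))
    (htop : ∀ p ∈ A, 0 < n → p.1 (n-1) = σ (seg p.1 (n-1)))
    (hgrp : ∀ x ∈ (Prod.fst '' A ∪ S),
      {y ∈ (Prod.fst '' A ∪ S) | seg y n = seg x n}.ncard ≤ 2 ^ k - 1) :
    ∃ q : Cond k, N ≤ q.n ∧ n ≤ q.n ∧ (∀ l : List (Fin 2), l.length < n → q.σ l = σ l) ∧
      A ⊆ q.A ∧ ∀ y ∈ S, (y, q.n) ∈ q.A := by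
  classical
  set B : Set (ℕ → Fin 2) := Prod.fst '' A ∪ S with hB
  have hBfin : B.Finite := (hAfin.image _).union hSfin
  obtain ⟨M, hM⟩ := exists_sep hBfin
  set n' : ℕ := max N (max (n+1) (M+1)) with hn'
  have hn'N : N ≤ n' := le_max_left _ _
  have hn'n : n + 1 ≤ n' := le_trans (le_max_left _ _) (le_max_right _ _)
  have hn'M : M + 1 ≤ n' := le_trans (le_max_right _ _) (le_max_right _ _)
  set σ' : List (Fin 2) → Fin 2 := fun t =>
    if t.length < n then σ t else if t.length < n' then maj B t else 0 with hσ'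
  -- key facts about σ'
  have hσ'low : ∀ t : List (Fin 2), t.length < n → σ' t = σ t := by
    intro t ht; simp only [hσ']; rw [if_pos ht]
  have hσ'mid : ∀ t : List (Fin 2), n ≤ t.length → t.length < n' → σ' t = maj B t := by
    intro t h1 h2; simp only [hσ']
    rw [if_neg (by omega : ¬ t.length < n), if_pos h2]
  -- the separated singleton property at levels ≥ M
  have hsingle : ∀ x ∈ B, ∀ ℓ, M ≤ ℓ → ∀ y ∈ B, seg y ℓ = seg x ℓ → y = x := by
    intro x hx ℓ hℓ y hy hseg
    by_contra hne
    exact hM y hy x hx hne ℓ hℓ hseg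
  -- new A
  set A' : Set ((ℕ → Fin 2) × ℕ) := A ∪ (fun y => (y, n')) '' S with hA'
  have hA'fst : Prod.fst '' A' ⊆ B := by
    rintro z ⟨p, hp, rfl⟩
    rcases hp with hp | ⟨y, hy, rfl⟩
    · exact Or.inl ⟨p, hp, rfl⟩
    · exact Or.inr hy
  refine ⟨⟨n', σ', A', ?_, ?_, ?_, ?_, ?_, ?_⟩, hn'N, (show n ≤ n' by omega), hσ'low, ?_, ?_⟩
  · exact hAfin.union (hSfin.image _)
  · intro l hl
    simp only [hσ']
    rw [if_neg (by omega : ¬ l.length < n), if_neg (by omega : ¬ l.length < n')]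
  · rintro p (hp | ⟨y, hy, rfl⟩)
    · exact le_trans (hm p hp) (by omega)
    · exact le_rfl
  · -- hsep at n'
    intro p hp q hq hne
    have hp1 : p.1 ∈ B := hA'fst ⟨p, hp, rfl⟩
    have hq1 : q.1 ∈ B := hA'fst ⟨q, hq, rfl⟩
    exact hM p.1 hp1 q.1 hq1 hne n' (by omega)
  · -- hwin
    rintro p hp j hj hjk
    rcases hp with hp | ⟨y, hy, rfl⟩
    swap
    · -- new pair, label n', vacuous
      exfalso
      have hj' : n' ≤ j := hj
      omega
    have hx : p.1 ∈ B := Or.inl ⟨p, hp, rfl⟩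
    by_cases h1 : j + k ≤ n
    · obtain ⟨i, hi1, hi2, hi3⟩ := hwin p hp j hj h1
      exact ⟨i, hi1, hi2, by rw [hσ'low _ (by rw [seg_length]; omega)]; exact hi3⟩
    · by_cases h2 : n ≤ j
      · -- majority case
        have hsub : {y ∈ B | seg y j = seg p.1 j} ⊆ {y ∈ B | seg y n = seg p.1 n} := by
          rintro y ⟨hyB, hys⟩
          exact ⟨hyB, seg_mono h2 hys⟩
        have hcard : {y ∈ B | seg y j = seg p.1 j}.ncard ≤ 2 ^ k - 1 :=
          le_trans (Set.ncard_le_ncard hsub (hBfin.subset fun y hy => hy.1)) (hgrp p.1 hx)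
        obtain ⟨i, hi1, hi2, hi3⟩ := maj_hit hBfin hx hcard
        refine ⟨i, hi1, hi2, ?_⟩
        rw [hσ'mid _ (by rw [seg_length]; omega) (by rw [seg_length]; omega)]
        exact hi3
      · -- straddle: hit at n - 1
        push_neg at h1 h2
        have h0 : 0 < n := by omega
        refine ⟨n - 1, by omega, by omega, ?_⟩
        rw [hσ'low _ (by rw [seg_length]; omega)]
        exact htop p hp h0
  · -- htop at n' - 1
    intro p hp _
    have hx : p.1 ∈ B := hA'fst ⟨p, hp, rfl⟩
    have hlen : n ≤ n' - 1 ∧ n' - 1 < n' := by omega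
    rw [hσ'mid _ (by rw [seg_length]; omega) (by rw [seg_length]; omega)]
    exact (maj_singleton hx (hsingle p.1 hx (n'-1) (by omega))).symm
  · exact Set.subset_union_left
  · intro y hy
    exact Or.inr ⟨y, hy, rfl⟩

/-! ## σ-linkedness -/

lemma cond_sigmaLinked (k : ℕ) (hk : 1 ≤ k) : SigmaLinked (2 ^ k - 1) (Cond k) := by
  classical
  let I := Σ n : ℕ, {f : List (Fin 2) → Fin 2 // ∀ l : List (Fin 2), n ≤ l.length → f l = 0}
  haveI hcnt : ∀ n : ℕ,
      Countable {f : List (Fin 2) → Fin 2 // ∀ l : List (Fin 2), n ≤ l.length → f l = 0} := by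
    intro n
    haveI : Finite {l : List (Fin 2) // l.length < n} := (List.finite_length_lt (Fin 2) n).to_subtype
    have hinj : Function.Injective
        (fun f : {f : List (Fin 2) → Fin 2 // ∀ l : List (Fin 2), n ≤ l.length → f l = 0} =>
          (fun l : {l : List (Fin 2) // l.length < n} => f.1 l.1)) := by
      intro f g h
      apply Subtype.ext
      funext l
      by_cases hl : l.length < n
      · exact congrFun h ⟨l, hl⟩
      · rw [f.2 l (by omega), g.2 l (by omega)]
    exact hinj.countable
  haveI : Countable I := by infer_instance
  haveI : Nonempty I := ⟨⟨0, ⟨fun _ => 0, fun _ _ => rfl⟩⟩⟩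
  obtain ⟨f, hf⟩ := exists_surjective_nat I
  refine ⟨fun m => {p : Cond k | p.n = (f m).1 ∧ p.σ = (f m).2.1}, ?_, ?_⟩
  · intro p
    obtain ⟨m, hm⟩ := hf ⟨p.n, ⟨p.σ, p.hnorm⟩⟩
    refine ⟨m, ?_⟩
    show p.n = (f m).1 ∧ p.σ = (f m).2.1
    rw [hm]
    exact ⟨rfl, rfl⟩
  · intro m e he
    set n₀ : ℕ := (f m).1 with hn₀
    set σ₀ : List (Fin 2) → Fin 2 := (f m).2.1 with hσ₀
    have hen : ∀ i, (e i).n = n₀ := fun i => (he i).1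
    have heσ : ∀ i, (e i).σ = σ₀ := fun i => (he i).2
    set A : Set ((ℕ → Fin 2) × ℕ) := ⋃ i, (e i).A with hA
    have hAfin : A.Finite := Set.finite_iUnion (fun i => (e i).hfin)
    have hgrp : ∀ x ∈ (Prod.fst '' A ∪ (∅ : Set (ℕ → Fin 2))),
        {y ∈ (Prod.fst '' A ∪ ∅) | seg y n₀ = seg x n₀}.ncard ≤ 2 ^ k - 1 := by
      intro x hx
      set G := {y ∈ (Prod.fst '' A ∪ (∅ : Set (ℕ → Fin 2))) | seg y n₀ = seg x n₀} with hG
      have hGfin : G.Finite := ((hAfin.image _).union (Set.finite_empty)).subset (fun y hy => hy.1)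
      have hch : ∀ y ∈ G, ∃ i : Fin (2 ^ k - 1), ∃ pr ∈ (e i).A, pr.1 = y := by
        rintro y ⟨hy1, hy2⟩
        rcases hy1 with ⟨pr, hpr, rfl⟩ | h
        · obtain ⟨i, hi⟩ := Set.mem_iUnion.mp hpr
          exact ⟨i, pr, hi, rfl⟩
        · exact absurd h (Set.notMem_empty _)
      have hpos : 0 < 2 ^ k - 1 := by
        have : (2:ℕ) = 2 ^ 1 := rfl
        have h2 : (2:ℕ) ≤ 2 ^ k := by
          calc (2:ℕ) = 2 ^ 1 := rfl
            _ ≤ 2 ^ k := Nat.pow_le_pow_right (by omega) hk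
        omega
      haveI : Nonempty (Fin (2 ^ k - 1)) := ⟨⟨0, hpos⟩⟩
      choose! φ pr hpr hpr2 using hch
      have hinjOn : Set.InjOn φ G := by
        intro y hy z hz hφ
        have h1 := hpr y hy
        have h2 := hpr z hz
        rw [hφ] at h1
        by_contra hne
        have := (e (φ z)).hsep (pr y) h1 (pr z) h2 (by
          rw [hpr2 y hy, hpr2 z hz]; exact hne)
        rw [hpr2 y hy, hpr2 z hz, hen (φ z)] at this
        exact this (hy.2.trans hz.2.symm)
      calc G.ncard = (φ '' G).ncard := (Set.ncard_image_of_injOn hinjOn).symm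
        _ ≤ (Set.univ : Set (Fin (2 ^ k - 1))).ncard :=
            Set.ncard_le_ncard (Set.subset_univ _) Set.finite_univ
        _ = 2 ^ k - 1 := by rw [Set.ncard_univ]; simp
    obtain ⟨q, _, hqn, hqσ, hqA, -⟩ := ext_lemma hk n₀ 0 σ₀ A ∅ hAfin Set.finite_empty
      (f m).2.2
      (by rintro p hp
          obtain ⟨i, hi⟩ := Set.mem_iUnion.mp hp
          rw [← hen i]; exact (e i).hm p hi)
      (by rintro p hp j hj hjk
          obtain ⟨i, hi⟩ := Set.mem_iUnion.mp hp
          have := (e i).hwin p hi j hj (by rw [hen i]; exact hjk)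
          rwa [heσ i] at this)
      (by rintro p hp h0
          obtain ⟨i, hi⟩ := Set.mem_iUnion.mp hp
          have := (e i).htop p hi (by rw [hen i]; exact h0)
          rwa [heσ i, hen i] at this)
      hgrp
    refine ⟨q, fun i => ⟨?_, ?_, ?_⟩⟩
    · rw [hen i]; exact hqn
    · intro l hl
      rw [heσ i]
      exact hqσ l (by rw [← hen i]; exact hl)
    · exact le_trans (Set.subset_iUnion (fun i => (e i).A) i) hqA

/-! ## density -/

lemma dense_DN {k : ℕ} (hk : 1 ≤ k) (N : ℕ) : DenseBelow {p : Cond k | N ≤ p.n} := by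
  intro p
  have hgrp : ∀ x ∈ (Prod.fst '' p.A ∪ (∅ : Set (ℕ → Fin 2))),
      {y ∈ (Prod.fst '' p.A ∪ ∅) | seg y p.n = seg x p.n}.ncard ≤ 2 ^ k - 1 := by
    intro x hx
    have hsub : {y ∈ (Prod.fst '' p.A ∪ (∅ : Set (ℕ → Fin 2))) | seg y p.n = seg x p.n} ⊆ {x} := by
      rintro y ⟨hy1, hy2⟩
      rcases hy1 with ⟨pr, hpr, rfl⟩ | h
      · rcases hx with ⟨qr, hqr, rfl⟩ | h
        · by_contra hne
          exact p.hsep pr hpr qr hqr (by simpa using hne) hy2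
        · exact absurd h (Set.notMem_empty _)
      · exact absurd h (Set.notMem_empty _)
    calc {y ∈ (Prod.fst '' p.A ∪ (∅ : Set (ℕ → Fin 2))) | seg y p.n = seg x p.n}.ncard
        ≤ ({x} : Set _).ncard := Set.ncard_le_ncard hsub (Set.finite_singleton x)
      _ = 1 := Set.ncard_singleton x
      _ ≤ 2 ^ k - 1 := by
          have : (2:ℕ) ≤ 2 ^ k := by
            calc (2:ℕ) = 2 ^ 1 := rfl
              _ ≤ 2 ^ k := Nat.pow_le_pow_right (by omega) hk
          omega
  obtain ⟨q, hqN, hqn, hqσ, hqA, -⟩ := ext_lemma hk p.n N p.σ p.A ∅ p.hfin Set.finite_empty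
    p.hnorm p.hm p.hwin p.htop hgrp
  exact ⟨q, hqN, hqn, hqσ, hqA⟩

lemma dense_Dy {k : ℕ} (hk : 2 ≤ k) (y : ℕ → Fin 2) :
    DenseBelow {p : Cond k | ∃ m, (y, m) ∈ p.A} := by
  intro p
  have h2k : (3:ℕ) ≤ 2 ^ k := by
    calc (3:ℕ) ≤ 2 ^ 2 := by omega
      _ ≤ 2 ^ k := Nat.pow_le_pow_right (by omega) hk
  have hgrp : ∀ x ∈ (Prod.fst '' p.A ∪ ({y} : Set (ℕ → Fin 2))),
      {z ∈ (Prod.fst '' p.A ∪ {y}) | seg z p.n = seg x p.n}.ncard ≤ 2 ^ k - 1 := by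
    intro x hx
    set G := {z ∈ (Prod.fst '' p.A ∪ ({y} : Set (ℕ → Fin 2))) | seg z p.n = seg x p.n} with hG
    have hsub : G ⊆ {z ∈ Prod.fst '' p.A | seg z p.n = seg x p.n} ∪ {y} := by
      rintro z ⟨hz1, hz2⟩
      rcases hz1 with hz | hz
      · exact Or.inl ⟨hz, hz2⟩
      · exact Or.inr hz
    have hss : {z ∈ Prod.fst '' p.A | seg z p.n = seg x p.n}.Subsingleton := by
      rintro a ⟨⟨pra, hpra, rfl⟩, ha2⟩ b ⟨⟨prb, hprb, rfl⟩, hb2⟩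
      by_contra hne
      exact p.hsep pra hpra prb hprb (by simpa using hne) (ha2.trans hb2.symm)
    have h1 : {z ∈ Prod.fst '' p.A | seg z p.n = seg x p.n}.ncard ≤ 1 := by
      rcases hss.eq_empty_or_singleton with h | ⟨a, h⟩
      · rw [h]; simp
      · rw [h]; simp
    calc G.ncard ≤ _ := Set.ncard_le_ncard hsub
          (((p.hfin.image _).subset (fun z hz => hz.1)).union (Set.finite_singleton y))
      _ ≤ {z ∈ Prod.fst '' p.A | seg z p.n = seg x p.n}.ncard + ({y} : Set _).ncard :=
          Set.ncard_union_le _ _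
      _ ≤ 1 + 1 := by
          have := Set.ncard_singleton y
          omega
      _ ≤ 2 ^ k - 1 := by omega
  obtain ⟨q, _, hqn, hqσ, hqA, hqy⟩ := ext_lemma (by omega) p.n 0 p.σ p.A {y} p.hfin
    (Set.finite_singleton y) p.hnorm p.hm p.hwin p.htop hgrp
  exact ⟨q, ⟨q.n, hqy y rfl⟩, hqn, hqσ, hqA⟩


/-! ## prediction from MA -/

lemma predict_of_MA {k : ℕ} (hk : 2 ≤ k) {κ : Cardinal} (hMA : MAat (2 ^ k - 1) κ)
    (F : Set (ℕ → Fin 2)) (hF : #F ≤ κ) (hinf : F.Infinite) :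
    ∃ π : List (Fin 2) → Fin 2, ∀ g ∈ F, KPred k π g := by
  classical
  set Dy : (ℕ → Fin 2) → Set (Cond k) := fun y => {p : Cond k | ∃ m, (y, m) ∈ p.A} with hDy
  set DN : ℕ → Set (Cond k) := fun N => {p : Cond k | N ≤ p.n} with hDN
  set D : Set (Set (Cond k)) := Dy '' F ∪ Set.range DN with hD
  have hcard : #D ≤ κ := by
    calc #D ≤ #(Dy '' F) + #(Set.range DN) := mk_union_le _ _
      _ ≤ #F + ℵ₀ := by
          apply add_le_add mk_image_le
          calc #(Set.range DN) ≤ #ℕ := mk_range_le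
            _ = ℵ₀ := mk_nat
      _ = #F := by
          have h := Cardinal.infinite_iff.mp hinf.to_subtype
          exact add_eq_left h h
      _ ≤ κ := hF
  have hdense : ∀ d ∈ D, DenseBelow d := by
    rintro d (⟨y, hy, rfl⟩ | ⟨N, rfl⟩)
    · exact dense_Dy hk y
    · exact dense_DN (by omega) N
  obtain ⟨G, hGfil, hGmeet⟩ := hMA (Cond k) (cond_sigmaLinked k (by omega)) D hcard hdense
  have hDNmem : ∀ N : ℕ, (G ∩ DN N).Nonempty := fun N => hGmeet (DN N) (Or.inr ⟨N, rfl⟩)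
  have hex : ∀ s : List (Fin 2), ∃ p : Cond k, p ∈ G ∧ s.length < p.n := by
    intro s
    obtain ⟨p, hpG, hpD⟩ := hDNmem (s.length + 1)
    exact ⟨p, hpG, hpD⟩
  choose pf hpfG hpfn using hex
  set π : List (Fin 2) → Fin 2 := fun s => (pf s).σ s with hπdef
  have hπ : ∀ p ∈ G, ∀ s : List (Fin 2), s.length < p.n → π s = p.σ s := by
    intro p hp s hs
    obtain ⟨r, hrG, hr1, hr2⟩ := hGfil.2 p hp (pf s) (hpfG s)
    have e1 : r.σ s = p.σ s := hr1.2.1 s hs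
    have e2 : r.σ s = (pf s).σ s := hr2.2.1 s (hpfn s)
    exact (e2.symm.trans e1 : π s = p.σ s)
  refine ⟨π, ?_⟩
  intro y hy
  obtain ⟨p, hpG, m₀, hm₀⟩ := hGmeet (Dy y) (Or.inl ⟨y, hy, rfl⟩)
  refine ⟨m₀, fun j hj => ?_⟩
  obtain ⟨q, hqG, hqn⟩ := hDNmem (j + k)
  obtain ⟨r, hrG, hr1, hr2⟩ := hGfil.2 p hpG q hqG
  have hyA : (y, m₀) ∈ r.A := hr1.2.2 hm₀
  have hjk : j + k ≤ r.n := le_trans hqn hr2.1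
  obtain ⟨i, h1, h2, h3⟩ := r.hwin (y, m₀) hyA j hj hjk
  refine ⟨i, h1, h2, ?_⟩
  rw [hπ r hrG (seg y i) (by rw [seg_length]; omega)]
  exact h3

/-! ## finitely many reals are predictable outright -/

lemma predict_finite {k : ℕ} (hk : 1 ≤ k) {F : Set (ℕ → Fin 2)} (hF : F.Finite) :
    ∃ π : List (Fin 2) → Fin 2, ∀ g ∈ F, KPred k π g := by
  classical
  obtain ⟨M, hM⟩ := exists_sep hF
  refine ⟨fun s => if h : ∃ x, x ∈ F ∧ seg x s.length = s then h.choose s.length else 0, ?_⟩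
  intro y hy
  refine ⟨M, fun m hm => ⟨m, le_rfl, by omega, ?_⟩⟩
  have hex : ∃ x, x ∈ F ∧ seg x (seg y m).length = seg y m := ⟨y, hy, by rw [seg_length]⟩
  beta_reduce
  rw [dif_pos hex]
  obtain ⟨hxF, hxseg⟩ := hex.choose_spec
  have hxseg' : seg hex.choose m = seg y m :=
    (congrArg (seg hex.choose) (seg_length y m)).symm.trans hxseg
  have hxy : hex.choose = y := by
    by_contra hne
    exact hM _ hxF y hy hne m hm hxseg'
  calc y m = hex.choose m := (congrFun hxy m).symm
    _ = hex.choose ((seg y m).length) := congrArg hex.choose (seg_length y m).symm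

/-! ## a diagonal evader -/

def diagL (π : List (Fin 2) → Fin 2) : ℕ → List (Fin 2)
  | 0 => []
  | (i+1) => diagL π i ++ [if π (diagL π i) = 0 then 1 else 0]

def diagX (π : List (Fin 2) → Fin 2) (i : ℕ) : Fin 2 :=
  if π (diagL π i) = 0 then 1 else 0

lemma diag_seg (π : List (Fin 2) → Fin 2) (i : ℕ) : seg (diagX π) i = diagL π i := by
  induction i with
  | zero => rfl
  | succ i ih => rw [seg_succ, ih]; rfl

lemma exists_evader (k : ℕ) (π : List (Fin 2) → Fin 2) : ¬ KPred k π (diagX π) := by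
  rintro ⟨N, hN⟩
  obtain ⟨i, _, _, hi⟩ := hN N le_rfl
  rw [diag_seg π i] at hi
  by_cases h : π (diagL π i) = 0
  · rw [h] at hi
    rw [diagX, if_pos h] at hi
    exact absurd hi (by decide)
  · have h1 : π (diagL π i) = 1 := by omega
    rw [h1] at hi
    rw [diagX, if_neg h] at hi
    exact absurd hi (by decide)

/-- Corollary 3.7: `𝔪(σ-(2ᵏ−1)-linked) ≤ 𝔢₂ᶜᵒⁿˢᵗ(k)`: if `MA_κ` holds for all σ-(2ᵏ−1)-linked
partial orders, then every `F ⊆ 2^ω` of size `≤ κ` is k-constantly predicted by a single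
predictor. -/
theorem stmt10 (k : ℕ) (hk : 2 ≤ k) :
    (∀ κ : Cardinal, MAat (2 ^ k - 1) κ →
      ∀ F : Set (ℕ → Fin 2), #F ≤ κ →
        ∃ π : List (Fin 2) → Fin 2, ∀ g ∈ F, KPred k π g) ∧
    mLinked (2 ^ k - 1) ≤ eConst 2 k := by
  have part1 : ∀ κ : Cardinal, MAat (2 ^ k - 1) κ →
      ∀ F : Set (ℕ → Fin 2), #F ≤ κ →
        ∃ π : List (Fin 2) → Fin 2, ∀ g ∈ F, KPred k π g := by
    intro κ hMA F hF
    by_cases hfin : F.Finite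
    · exact predict_finite (by omega) hfin
    · exact predict_of_MA hk hMA F hF hfin
  refine ⟨part1, ?_⟩
  have hne : {c | ∃ F : Set (ℕ → Fin 2), #F = c ∧
      ∀ π : List (Fin 2) → Fin 2, ∃ x ∈ F, ¬ KPred k π x}.Nonempty := by
    refine ⟨#(Set.univ : Set (ℕ → Fin 2)), Set.univ, rfl, fun π => ?_⟩
    exact ⟨diagX π, Set.mem_univ _, exists_evader k π⟩
  have hmem : eConst 2 k ∈ {c | ∃ F : Set (ℕ → Fin 2), #F = c ∧
      ∀ π : List (Fin 2) → Fin 2, ∃ x ∈ F, ¬ KPred k π x} := csInf_mem hne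
  obtain ⟨F, hFcard, hFev⟩ := hmem
  apply csInf_le (OrderBot.bddBelow _)
  intro hMA
  obtain ⟨π, hπ⟩ := part1 (eConst 2 k) hMA F (le_of_eq hFcard)
  obtain ⟨x, hxF, hxev⟩ := hFev π
  exact hxev (hπ x hxF)
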